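/- Let Λ, S ⊂ {1,…,n} be disjoint with |Λ| = a, |S| = b, and suppose δ_a < 1 and δ_{a+b} < 1 where δ_s are the RIP constants of Φ. Then for any u supported on S, ‖P_Λ Φ_S u_S‖₂² ≤ (δ_{a+b}² (1+δ_a)/(1-δ_a)²) ‖u‖₂², where P_Λ is the orthogonal projection onto span(Φ_Λ). -/

import Mathlib

/-!
Write `A = Φ_Λ`, `z = Aᵀ Φ u` and `w = (AᵀA)⁻¹ z`, so that `P_Λ Φ u = A w`. The upper RIP bound
gives `‖A w‖² ≤ (1 + δ_a) ‖w‖²`. The lower RIP bound and Cauchy–Schwarz give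
`(1 - δ_a) ‖w‖² ≤ ‖A w‖² = ⟪w, z⟫ ≤ ‖w‖ ‖z‖`, hence `(1 - δ_a) ‖w‖ ≤ ‖z‖`. Finally
`‖z‖² = ⟪Φ z, Φ u⟫` pairs two vectors with disjoint supports, and polarizing the RIP of order
`a + b` bounds such a pairing by `δ_{a+b} ‖z‖ ‖u‖`, so `‖z‖ ≤ δ_{a+b} ‖u‖`.
-/

open Matrix

/-- A vector is K-sparse if it has at most K nonzero entries. -/
def IsSparse {n : ℕ} (K : ℕ) (x : Fin n → ℝ) : Prop :=
  (Finset.univ.filter fun i => x i ≠ 0).card ≤ K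

/-- The Euclidean (ℓ₂) norm of a finitely-indexed real vector. -/
noncomputable def l2norm {ι : Type*} [Fintype ι] (v : ι → ℝ) : ℝ :=
  Real.sqrt (∑ i, v i ^ 2)

/-- Φ satisfies the RIP of order K with constant δ. -/
def SatisfiesRIP {m n : ℕ} (Φ : Matrix (Fin m) (Fin n) ℝ) (K : ℕ) (δ : ℝ) : Prop :=
  ∀ x : Fin n → ℝ, IsSparse K x →
    (1 - δ) * l2norm x ^ 2 ≤ l2norm (Φ.mulVec x) ^ 2 ∧
    l2norm (Φ.mulVec x) ^ 2 ≤ (1 + δ) * l2norm x ^ 2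

/-- The column-submatrix of Φ consisting of columns indexed by I. -/
def colSub {m n : ℕ} (Φ : Matrix (Fin m) (Fin n) ℝ) (I : Finset (Fin n)) :
    Matrix (Fin m) I ℝ :=
  fun i j => Φ i (j : Fin n)

section l2norm

variable {ι : Type*} [Fintype ι]

lemma l2norm_nonneg (v : ι → ℝ) : 0 ≤ l2norm v :=
  Real.sqrt_nonneg _

lemma l2norm_sq_eq_dotProduct (v : ι → ℝ) : l2norm v ^ 2 = v ⬝ᵥ v := by
  rw [l2norm, Real.sq_sqrt (Finset.sum_nonneg fun i _ => sq_nonneg _)]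
  simp only [dotProduct, sq]

lemma dotProduct_le_l2norm_mul_l2norm (v w : ι → ℝ) : v ⬝ᵥ w ≤ l2norm v * l2norm w :=
  Real.sum_mul_le_sqrt_mul_sqrt _ v w

lemma l2norm_sq_transpose_mul_self_mulVec {κ : Type*} [Fintype κ] (A : Matrix κ ι ℝ)
    (w : ι → ℝ) : l2norm (A *ᵥ w) ^ 2 = w ⬝ᵥ ((Aᵀ * A) *ᵥ w) := by
  rw [l2norm_sq_eq_dotProduct, ← mulVec_mulVec, dotProduct_mulVec w, vecMul_transpose]

lemma mul_l2norm_le_l2norm_gram_mulVec {κ : Type*} [Fintype κ] (A : Matrix κ ι ℝ) {c : ℝ}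
    {w : ι → ℝ} (hA : c * l2norm w ^ 2 ≤ l2norm (A *ᵥ w) ^ 2) :
    c * l2norm w ≤ l2norm ((Aᵀ * A) *ᵥ w) := by
  have hCS : l2norm w * (c * l2norm w) ≤ l2norm w * l2norm ((Aᵀ * A) *ᵥ w) := by
    calc l2norm w * (c * l2norm w) = c * l2norm w ^ 2 := by ring
      _ ≤ w ⬝ᵥ ((Aᵀ * A) *ᵥ w) := (l2norm_sq_transpose_mul_self_mulVec A w) ▸ hA
      _ ≤ _ := dotProduct_le_l2norm_mul_l2norm _ _
  rcases (l2norm_nonneg w).eq_or_lt with hw | hw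
  · rw [← hw, mul_zero]
    exact l2norm_nonneg _
  · exact le_of_mul_le_mul_left hCS hw

end l2norm

section zeroExtend

variable {ι : Type*} [DecidableEq ι]

def zeroExtend (I : Finset ι) (v : I → ℝ) : ι → ℝ :=
  fun i => if h : i ∈ I then v ⟨i, h⟩ else 0

lemma zeroExtend_of_notMem (I : Finset ι) (v : I → ℝ) {i : ι} (h : i ∉ I) :
    zeroExtend I v i = 0 :=
  dif_neg h

variable [Fintype ι]

lemma dotProduct_zeroExtend (I : Finset ι) (v : I → ℝ) (f : ι → ℝ) :
    f ⬝ᵥ zeroExtend I v = (fun j : I => f j) ⬝ᵥ v := by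
  simp only [dotProduct]
  rw [← Finset.sum_subset (Finset.subset_univ I)
    (fun i _ hi => by rw [zeroExtend_of_notMem I v hi, mul_zero]), ← Finset.sum_coe_sort I]
  exact Finset.sum_congr rfl fun j _ => by simp [zeroExtend, j.2]

lemma l2norm_zeroExtend (I : Finset ι) (v : I → ℝ) : l2norm (zeroExtend I v) = l2norm v := by
  have hsq : l2norm (zeroExtend I v) ^ 2 = l2norm v ^ 2 := by
    rw [l2norm_sq_eq_dotProduct, l2norm_sq_eq_dotProduct, dotProduct_zeroExtend]
    congr 1
    funext j
    simp [zeroExtend, j.2]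
  exact (pow_left_inj₀ (l2norm_nonneg _) (l2norm_nonneg _) two_ne_zero).mp hsq

end zeroExtend

variable {m n : ℕ}

lemma colSub_mulVec (Φ : Matrix (Fin m) (Fin n) ℝ) (I : Finset (Fin n)) (v : I → ℝ) :
    colSub Φ I *ᵥ v = Φ *ᵥ zeroExtend I v := by
  funext i
  exact (dotProduct_zeroExtend I v (Φ i)).symm

lemma isSparse_of_support_subset {K : ℕ} {I : Finset (Fin n)} (hI : I.card ≤ K) {x : Fin n → ℝ}
    (hx : ∀ i, i ∉ I → x i = 0) : IsSparse K x := by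
  refine (Finset.card_le_card fun i hi => ?_).trans hI
  by_contra hiI
  exact (Finset.mem_filter.mp hi).2 (hx i hiI)

lemma dotProduct_eq_zero_of_disjoint {Λ S : Finset (Fin n)} (hΛS : Disjoint Λ S)
    {x y : Fin n → ℝ} (hx : ∀ i, i ∉ Λ → x i = 0) (hy : ∀ i, i ∉ S → y i = 0) : x ⬝ᵥ y = 0 :=
  Finset.sum_eq_zero fun i _ => by
    by_cases hi : i ∈ Λ
    · rw [hy i (Finset.disjoint_left.mp hΛS hi), mul_zero]
    · rw [hx i hi, zero_mul]

namespace SatisfiesRIP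

variable {Φ : Matrix (Fin m) (Fin n) ℝ} {K : ℕ} {δ : ℝ}

lemma colSub_mulVec (hΦ : SatisfiesRIP Φ K δ) {I : Finset (Fin n)} (hI : I.card ≤ K)
    (v : I → ℝ) :
    (1 - δ) * l2norm v ^ 2 ≤ l2norm (colSub Φ I *ᵥ v) ^ 2 ∧
      l2norm (colSub Φ I *ᵥ v) ^ 2 ≤ (1 + δ) * l2norm v ^ 2 := by
  rw [_root_.colSub_mulVec, ← l2norm_zeroExtend I v]
  exact hΦ _ (isSparse_of_support_subset hI fun i hi => zeroExtend_of_notMem I v hi)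

/-- The quadratic in `t` is half of
`(1 + δ) ‖t x + y‖² - ‖Φ (t x + y)‖² + ‖Φ (t x - y)‖² - (1 - δ) ‖t x - y‖²`. -/
lemma polarization_nonneg (hΦ : SatisfiesRIP Φ K δ) {Λ S : Finset (Fin n)}
    (hΛS : Disjoint Λ S) (hK : Λ.card + S.card ≤ K) {x y : Fin n → ℝ}
    (hx : ∀ i, i ∉ Λ → x i = 0) (hy : ∀ i, i ∉ S → y i = 0) (t : ℝ) :
    0 ≤ δ * l2norm x ^ 2 * (t * t) + -2 * ((Φ *ᵥ x) ⬝ᵥ (Φ *ᵥ y)) * t + δ * l2norm y ^ 2 := by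
  have hxy := dotProduct_eq_zero_of_disjoint hΛS hx hy
  have hsparse : ∀ s : ℝ, IsSparse K (t • x + s • y) := fun s =>
    isSparse_of_support_subset ((Finset.card_union_le Λ S).trans hK) fun i hi => by
      rw [Finset.mem_union, not_or] at hi
      simp [hx i hi.1, hy i hi.2]
  have hnorm : ∀ s : ℝ,
      l2norm (t • x + s • y) ^ 2 = t ^ 2 * l2norm x ^ 2 + s ^ 2 * l2norm y ^ 2 := by
    intro s
    simp only [l2norm_sq_eq_dotProduct, add_dotProduct, dotProduct_add, smul_dotProduct,
      dotProduct_smul, dotProduct_comm y x, hxy, smul_eq_mul]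
    ring
  have himage : ∀ s : ℝ, l2norm (Φ *ᵥ (t • x + s • y)) ^ 2 = t ^ 2 * l2norm (Φ *ᵥ x) ^ 2
      + 2 * t * s * ((Φ *ᵥ x) ⬝ᵥ (Φ *ᵥ y)) + s ^ 2 * l2norm (Φ *ᵥ y) ^ 2 := by
    intro s
    simp only [l2norm_sq_eq_dotProduct, mulVec_add, mulVec_smul, add_dotProduct, dotProduct_add,
      smul_dotProduct, dotProduct_smul, dotProduct_comm (Φ *ᵥ y) (Φ *ᵥ x), smul_eq_mul]
    ring
  have hupper := (hΦ _ (hsparse 1)).2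
  have hlower := (hΦ _ (hsparse (-1))).1
  rw [hnorm, himage] at hupper hlower
  nlinarith

lemma dotProduct_mulVec_le (hΦ : SatisfiesRIP Φ K δ) (hδ : 0 ≤ δ) {Λ S : Finset (Fin n)}
    (hΛS : Disjoint Λ S) (hK : Λ.card + S.card ≤ K) {x y : Fin n → ℝ}
    (hx : ∀ i, i ∉ Λ → x i = 0) (hy : ∀ i, i ∉ S → y i = 0) :
    (Φ *ᵥ x) ⬝ᵥ (Φ *ᵥ y) ≤ δ * l2norm x * l2norm y := by
  have hdiscrim := discrim_le_zero (hΦ.polarization_nonneg hΛS hK hx hy)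
  rw [discrim] at hdiscrim
  refine le_of_sq_le_sq ?_ (by have := l2norm_nonneg x; have := l2norm_nonneg y; positivity)
  nlinarith

lemma l2norm_transpose_colSub_mulVec_le (hΦ : SatisfiesRIP Φ K δ) (hδ : 0 ≤ δ)
    {Λ S : Finset (Fin n)} (hΛS : Disjoint Λ S) (hK : Λ.card + S.card ≤ K) {u : Fin n → ℝ}
    (hu : ∀ i, i ∉ S → u i = 0) : l2norm ((colSub Φ Λ)ᵀ *ᵥ (Φ *ᵥ u)) ≤ δ * l2norm u := by
  set z := (colSub Φ Λ)ᵀ *ᵥ (Φ *ᵥ u)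
  have hz : l2norm z * l2norm z ≤ l2norm z * (δ * l2norm u) := by
    calc l2norm z * l2norm z = z ⬝ᵥ z := by rw [← sq, l2norm_sq_eq_dotProduct]
      _ = (Φ *ᵥ zeroExtend Λ z) ⬝ᵥ (Φ *ᵥ u) := by
        rw [← _root_.colSub_mulVec, ← vecMul_transpose, ← dotProduct_mulVec]
      _ ≤ δ * l2norm (zeroExtend Λ z) * l2norm u :=
        hΦ.dotProduct_mulVec_le hδ hΛS hK (fun i hi => zeroExtend_of_notMem Λ z hi) hu
      _ = l2norm z * (δ * l2norm u) := by rw [l2norm_zeroExtend]; ring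
  rcases (l2norm_nonneg z).eq_or_lt with hz0 | hz0
  · rw [← hz0]
    exact mul_nonneg hδ (l2norm_nonneg u)
  · exact le_of_mul_le_mul_left hz hz0

end SatisfiesRIP

theorem projection_disjoint_bound_general {m n : ℕ} (Φ : Matrix (Fin m) (Fin n) ℝ)
    (Λ S : Finset (Fin n)) (hdisj : Disjoint Λ S) (a b : ℕ)
    (ha : Λ.card = a) (hb : S.card = b)
    (hrank : IsUnit ((colSub Φ Λ)ᵀ * colSub Φ Λ))
    (δa δab : ℝ) (hδa0 : 0 ≤ δa) (hδa1 : δa < 1)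
    (hδab0 : 0 ≤ δab)
    (hRIPa : SatisfiesRIP Φ a δa) (hRIPab : SatisfiesRIP Φ (a + b) δab)
    (u : Fin n → ℝ) (hsupp : ∀ i, i ∉ S → u i = 0) :
    l2norm ((colSub Φ Λ * ((colSub Φ Λ)ᵀ * colSub Φ Λ)⁻¹ * (colSub Φ Λ)ᵀ).mulVec
        (Φ.mulVec u)) ^ 2 ≤
      δab ^ 2 * (1 + δa) / (1 - δa) ^ 2 * l2norm u ^ 2 := by
  set A := colSub Φ Λ
  set z := Aᵀ *ᵥ (Φ *ᵥ u)
  set w := (Aᵀ * A)⁻¹ *ᵥ z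
  have hproj : (A * (Aᵀ * A)⁻¹ * Aᵀ) *ᵥ (Φ *ᵥ u) = A *ᵥ w := by
    simp only [w, z, mulVec_mulVec, Matrix.mul_assoc]
  have hgram : (Aᵀ * A) *ᵥ w = z := by
    rw [mulVec_mulVec, mul_nonsing_inv _ ((isUnit_iff_isUnit_det _).mp hrank), one_mulVec]
  have hRIPw := hRIPa.colSub_mulVec ha.le w
  have hw : (1 - δa) * l2norm w ≤ l2norm z := hgram ▸ mul_l2norm_le_l2norm_gram_mulVec A hRIPw.1
  have hz : l2norm z ≤ δab * l2norm u :=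
    hRIPab.l2norm_transpose_colSub_mulVec_le hδab0 hdisj (by rw [ha, hb]) hsupp
  have hw' : l2norm w ≤ δab * l2norm u / (1 - δa) := by
    rw [le_div_iff₀ (by linarith)]
    linarith
  rw [hproj]
  calc l2norm (A *ᵥ w) ^ 2 ≤ (1 + δa) * l2norm w ^ 2 := hRIPw.2
    _ ≤ (1 + δa) * (δab * l2norm u / (1 - δa)) ^ 2 := by
      gcongr
      exact l2norm_nonneg w
    _ = δab ^ 2 * (1 + δa) / (1 - δa) ^ 2 * l2norm u ^ 2 := by rw [div_pow]; ring

theorem projection_disjoint_bound {m n : ℕ} (Φ : Matrix (Fin m) (Fin n) ℝ)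
    (Λ S : Finset (Fin n)) (hdisj : Disjoint Λ S) (a b : ℕ)
    (ha : Λ.card = a) (hb : S.card = b)
    (hrank : IsUnit ((colSub Φ Λ)ᵀ * colSub Φ Λ))
    (δa δab : ℝ) (hδa0 : 0 ≤ δa) (hδa1 : δa < 1)
    (hδab0 : 0 ≤ δab) (hδab1 : δab < 1)
    (hRIPa : SatisfiesRIP Φ a δa) (hRIPab : SatisfiesRIP Φ (a + b) δab)
    (u : Fin n → ℝ) (hsupp : ∀ i, i ∉ S → u i = 0) :
    l2norm ((colSub Φ Λ * ((colSub Φ Λ)ᵀ * colSub Φ Λ)⁻¹ * (colSub Φ Λ)ᵀ).mulVec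
        (Φ.mulVec u)) ^ 2 ≤
      δab ^ 2 * (1 + δa) / (1 - δa) ^ 2 * l2norm u ^ 2 :=
  projection_disjoint_bound_general Φ Λ S hdisj a b ha hb hrank δa δab hδa0 hδa1 hδab0 hRIPa hRIPab
    u hsupp
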